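/- Fix positive reals X_m ≤ X_n ≤ 2X_m and k > 0 with k X_m^{4/3} ≤ X_n² − X_m². Define g(x) = √(X_n² − x²) − √(X_m² − x²) − 2kx on [0, X_m). Then g''(x) ≥ g''(0) = (X_n² − X_m²)/(X_m X_n (X_m + X_n)) ≥ (k/6) X_m^{−5/3} for all x ∈ [0, X_m). -/

import Mathlib

/-!
With `s_a(x) = √(a² − x²)`, the phase has second derivative `a²/s_a³ − b²/s_b³` for `|x| < a ≤ b`,
which equals `1/a − 1/b` at `x = 0`. Writing `a²/s_a³ − 1/a = ((a/s_a)³ − 1)/a`, both `a/s_a ≥ 1` and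
`1/a` decrease in `a`, so `a ↦ a²/s_a³ − 1/a` is antitone and the second derivative at `x` is at
least its value at `0`. Finally `1/a − 1/b = (b² − a²)/(ab(a + b))`, whose denominator is at most
`6a³` when `b ≤ 2a`, and `k a^{4/3}/(6a³) = (k/6) a^{−5/3}`.
-/

open Real Filter Topology

section SqrtSqSubSq

variable {a b x : ℝ}

lemma hasDerivAt_sqrt_sq_sub_sq (hx : x ^ 2 < a ^ 2) :
    HasDerivAt (fun y => √(a ^ 2 - y ^ 2)) (-x / √(a ^ 2 - x ^ 2)) x := by
  have hpos : 0 < a ^ 2 - x ^ 2 := sub_pos.mpr hx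
  have hinner : HasDerivAt (fun y : ℝ => a ^ 2 - y ^ 2) (-(2 * x)) x := by
    simpa using (hasDerivAt_pow 2 x).const_sub (a ^ 2)
  refine ((hasDerivAt_sqrt hpos.ne').comp x hinner).congr_deriv ?_
  have : 0 < √(a ^ 2 - x ^ 2) := sqrt_pos.mpr hpos
  field_simp

lemma hasDerivAt_div_sqrt_sq_sub_sq (hx : x ^ 2 < a ^ 2) :
    HasDerivAt (fun y => y / √(a ^ 2 - y ^ 2)) (a ^ 2 / √(a ^ 2 - x ^ 2) ^ 3) x := by
  have hpos : 0 < a ^ 2 - x ^ 2 := sub_pos.mpr hx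
  have hs : 0 < √(a ^ 2 - x ^ 2) := sqrt_pos.mpr hpos
  refine ((hasDerivAt_id x).div (hasDerivAt_sqrt_sq_sub_sq hx) hs.ne').congr_deriv ?_
  have hsq : √(a ^ 2 - x ^ 2) ^ 2 = a ^ 2 - x ^ 2 := sq_sqrt hpos.le
  simp only [id_eq]
  field_simp
  linear_combination hsq

lemma div_sqrt_sq_sub_sq_le_div_sqrt_sq_sub_sq (ha : 0 < a) (hab : a ≤ b) (hx : x ^ 2 < a ^ 2) :
    b / √(b ^ 2 - x ^ 2) ≤ a / √(a ^ 2 - x ^ 2) := by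
  have hma : 0 < a ^ 2 - x ^ 2 := sub_pos.mpr hx
  have hmb : 0 < b ^ 2 - x ^ 2 := by nlinarith
  have hb : 0 < b := ha.trans_le hab
  rw [div_le_div_iff₀ (sqrt_pos.mpr hmb) (sqrt_pos.mpr hma),
    ← pow_le_pow_iff_left₀ (by positivity) (by positivity) two_ne_zero, mul_pow, mul_pow,
    sq_sqrt hma.le, sq_sqrt hmb.le]
  nlinarith [mul_le_mul_of_nonneg_left (pow_le_pow_left₀ ha.le hab 2) (sq_nonneg x)]

lemma one_le_div_sqrt_sq_sub_sq (ha : 0 < a) (hx : x ^ 2 < a ^ 2) :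
    1 ≤ a / √(a ^ 2 - x ^ 2) := by
  rw [one_le_div (sqrt_pos.mpr (sub_pos.mpr hx)), sqrt_le_left ha.le]
  linarith [sq_nonneg x]

lemma sq_div_sqrt_sq_sub_sq_pow_three_sub_one_div_le (ha : 0 < a) (hab : a ≤ b)
    (hx : x ^ 2 < a ^ 2) :
    b ^ 2 / √(b ^ 2 - x ^ 2) ^ 3 - 1 / b ≤ a ^ 2 / √(a ^ 2 - x ^ 2) ^ 3 - 1 / a := by
  have hb : 0 < b := ha.trans_le hab
  have hsa : 0 < √(a ^ 2 - x ^ 2) := sqrt_pos.mpr (sub_pos.mpr hx)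
  have hsb : 0 < √(b ^ 2 - x ^ 2) := sqrt_pos.mpr (by nlinarith)
  have hratio := div_sqrt_sq_sub_sq_le_div_sqrt_sq_sub_sq ha hab hx
  have hb1 := one_le_div_sqrt_sq_sub_sq hb (hx.trans_le (pow_le_pow_left₀ ha.le hab 2))
  have hcube : (b / √(b ^ 2 - x ^ 2)) ^ 3 ≤ (a / √(a ^ 2 - x ^ 2)) ^ 3 :=
    pow_le_pow_left₀ (by positivity) hratio 3
  have hb3 : 1 ≤ (b / √(b ^ 2 - x ^ 2)) ^ 3 := one_le_pow₀ hb1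
  calc b ^ 2 / √(b ^ 2 - x ^ 2) ^ 3 - 1 / b = ((b / √(b ^ 2 - x ^ 2)) ^ 3 - 1) / b := by
        field_simp
    _ ≤ ((a / √(a ^ 2 - x ^ 2)) ^ 3 - 1) / a := div_le_div₀ (by linarith) (by linarith) ha hab
    _ = a ^ 2 / √(a ^ 2 - x ^ 2) ^ 3 - 1 / a := by field_simp

end SqrtSqSubSq

section Phase

variable {a b c x : ℝ}

lemma hasDerivAt_phase (hab : a ^ 2 ≤ b ^ 2) (hx : x ^ 2 < a ^ 2) :
    HasDerivAt (fun y => √(b ^ 2 - y ^ 2) - √(a ^ 2 - y ^ 2) - c * y)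
      (x / √(a ^ 2 - x ^ 2) - x / √(b ^ 2 - x ^ 2) - c) x := by
  refine (((hasDerivAt_sqrt_sq_sub_sq (hx.trans_le hab)).sub (hasDerivAt_sqrt_sq_sub_sq hx)).sub
    ((hasDerivAt_id x).const_mul c)).congr_deriv ?_
  ring

lemma deriv_deriv_phase (hab : a ^ 2 ≤ b ^ 2) (hx : x ^ 2 < a ^ 2) :
    deriv (deriv fun y => √(b ^ 2 - y ^ 2) - √(a ^ 2 - y ^ 2) - c * y) x =
      a ^ 2 / √(a ^ 2 - x ^ 2) ^ 3 - b ^ 2 / √(b ^ 2 - x ^ 2) ^ 3 := by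
  have hnhds : {y : ℝ | y ^ 2 < a ^ 2} ∈ 𝓝 x :=
    (isOpen_lt (by fun_prop) continuous_const).mem_nhds hx
  have hderiv : deriv (fun y => √(b ^ 2 - y ^ 2) - √(a ^ 2 - y ^ 2) - c * y) =ᶠ[𝓝 x]
      fun y => y / √(a ^ 2 - y ^ 2) - y / √(b ^ 2 - y ^ 2) - c :=
    eventually_of_mem hnhds fun y hy => (hasDerivAt_phase hab hy).deriv
  rw [hderiv.deriv_eq]
  exact (((hasDerivAt_div_sqrt_sq_sub_sq hx).sub
    (hasDerivAt_div_sqrt_sq_sub_sq (hx.trans_le hab))).sub_const c).deriv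

lemma deriv_deriv_phase_zero (ha : 0 < a) (hab : a ≤ b) :
    deriv (deriv fun y => √(b ^ 2 - y ^ 2) - √(a ^ 2 - y ^ 2) - c * y) 0 = 1 / a - 1 / b := by
  have hb : 0 < b := ha.trans_le hab
  rw [deriv_deriv_phase (pow_le_pow_left₀ ha.le hab 2) (by simpa using pow_pos ha 2)]
  simp only [zero_pow two_ne_zero, sub_zero, sqrt_sq ha.le, sqrt_sq hb.le]
  field_simp

lemma deriv_deriv_phase_zero_le (ha : 0 < a) (hab : a ≤ b) (hx₀ : 0 ≤ x) (hxa : x < a) :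
    deriv (deriv fun y => √(b ^ 2 - y ^ 2) - √(a ^ 2 - y ^ 2) - c * y) 0 ≤
      deriv (deriv fun y => √(b ^ 2 - y ^ 2) - √(a ^ 2 - y ^ 2) - c * y) x := by
  have hx : x ^ 2 < a ^ 2 := pow_lt_pow_left₀ hxa hx₀ two_ne_zero
  rw [deriv_deriv_phase_zero ha hab, deriv_deriv_phase (pow_le_pow_left₀ ha.le hab 2) hx]
  linarith [sq_div_sqrt_sq_sub_sq_pow_three_sub_one_div_le ha hab hx]

end Phase

lemma one_div_sub_one_div_eq {K : Type*} [Field K] {a b : K} (ha : a ≠ 0) (hb : b ≠ 0) (hab : a + b ≠ 0) :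
    1 / a - 1 / b = (b ^ 2 - a ^ 2) / (a * b * (a + b)) := by
  field_simp
  ring

lemma div_six_mul_rpow_neg_five_thirds_le {a b k : ℝ} (ha : 0 < a) (hab : a ≤ b)
    (hb : b ≤ 2 * a) (hgap : k * a ^ ((4 : ℝ) / 3) ≤ b ^ 2 - a ^ 2) :
    k / 6 * a ^ (-(5 : ℝ) / 3) ≤ (b ^ 2 - a ^ 2) / (a * b * (a + b)) := by
  have hrpow : a ^ (-(5 : ℝ) / 3) = a ^ ((4 : ℝ) / 3) / a ^ 3 := by
    rw [← rpow_natCast a 3, ← rpow_sub ha]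
    norm_num
  have hb₀ : 0 < b := ha.trans_le hab
  have hden : a * b * (a + b) ≤ 6 * a ^ 3 := by
    nlinarith [mul_le_mul_of_nonneg_left hb ha.le, mul_le_mul_of_nonneg_left hab ha.le]
  calc k / 6 * a ^ (-(5 : ℝ) / 3) = k * a ^ ((4 : ℝ) / 3) / (6 * a ^ 3) := by
        rw [hrpow]
        ring
    _ ≤ (b ^ 2 - a ^ 2) / (a * b * (a + b)) :=
        div_le_div₀ (by nlinarith) hgap (by positivity) hden

theorem phase_second_derivative_bound_comparable_general (Xm Xn k : ℝ)
    (hXm : 0 < Xm) (h1 : Xm ≤ Xn) (h2 : Xn ≤ 2 * Xm)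
    (hgap : k * Xm ^ ((4:ℝ)/3) ≤ Xn^2 - Xm^2) :
    let g : ℝ → ℝ := fun x => Real.sqrt (Xn^2 - x^2) - Real.sqrt (Xm^2 - x^2) - 2 * k * x
    deriv (deriv g) 0 = (Xn^2 - Xm^2) / (Xm * Xn * (Xm + Xn)) ∧
    (k/6) * Xm ^ (-(5:ℝ)/3) ≤ deriv (deriv g) 0 ∧
    ∀ x ∈ Set.Ico (0:ℝ) Xm, deriv (deriv g) 0 ≤ deriv (deriv g) x := by
  intro g
  have hXn : 0 < Xn := hXm.trans_le h1
  have hg0 : deriv (deriv g) 0 = (Xn ^ 2 - Xm ^ 2) / (Xm * Xn * (Xm + Xn)) := by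
    rw [deriv_deriv_phase_zero hXm h1, one_div_sub_one_div_eq hXm.ne' hXn.ne' (by positivity)]
  refine ⟨hg0, ?_, fun x hx => deriv_deriv_phase_zero_le hXm h1 hx.1 hx.2⟩
  rw [hg0]
  exact div_six_mul_rpow_neg_five_thirds_le hXm h1 h2 hgap

/-- For `X_m ≤ X_n ≤ 2X_m`, `k > 0` and `kX_m^{4/3} ≤ X_n² − X_m²`, the function
`g(x) = √(X_n² − x²) − √(X_m² − x²) − 2kx` satisfies
`g''(x) ≥ g''(0) = (X_n²−X_m²)/(X_m X_n(X_m+X_n)) ≥ (k/6)X_m^{−5/3}` on `[0, X_m)`. -/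
theorem phase_second_derivative_bound_comparable (Xm Xn k : ℝ)
    (hXm : 0 < Xm) (h1 : Xm ≤ Xn) (h2 : Xn ≤ 2 * Xm) (hk : 0 < k)
    (hgap : k * Xm ^ ((4:ℝ)/3) ≤ Xn^2 - Xm^2) :
    let g : ℝ → ℝ := fun x => Real.sqrt (Xn^2 - x^2) - Real.sqrt (Xm^2 - x^2) - 2 * k * x
    deriv (deriv g) 0 = (Xn^2 - Xm^2) / (Xm * Xn * (Xm + Xn)) ∧
    (k/6) * Xm ^ (-(5:ℝ)/3) ≤ deriv (deriv g) 0 ∧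
    ∀ x ∈ Set.Ico (0:ℝ) Xm, deriv (deriv g) 0 ≤ deriv (deriv g) x :=
  phase_second_derivative_bound_comparable_general Xm Xn k hXm h1 h2 hgap
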